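/- arXiv:1503.00622 — 3 statements merged into one kernel-verified Lean document; each statement's English description precedes it below -/
import Mathlib

section
/- The seniority relation ⊑ on well-formed ground MDL terms is transitive: if t₁ ⊑ t₂ and t₂ ⊑ t₃ then t₁ ⊑ t₃. -/
/-- Ground MDL terms: symbols, tuples, records and choices
(records/choices as maps from labels to optional terms). -/
inductive MTerm (L S : Type) : Type where
  | sym : S → MTerm L S
  | tup : List (MTerm L S) → MTerm L S
  | rcd : (L → Option (MTerm L S)) → MTerm L S
  | cho : (L → Option (MTerm L S)) → MTerm L S

namespace MTerm

/-- The empty record `nil`. -/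
def nil {L S : Type} : MTerm L S := .rcd fun _ => none

/-- The empty choice `none`. -/
def bot {L S : Type} : MTerm L S := .cho fun _ => none

/-- The seniority relation on ground MDL terms. -/
inductive Sen {L S : Type} : MTerm L S → MTerm L S → Prop where
  | none_le (g : L → Option (MTerm L S)) : Sen bot (cho g)
  | le_nil (t : MTerm L S) : (∀ g, t ≠ cho g) → Sen t nil
  | refl (t : MTerm L S) : Sen t t
  | tup (ts ss : List (MTerm L S)) (h : ts.length = ss.length)
      (hs : ∀ i : Fin ss.length, Sen (ts.get (Fin.cast h.symm i)) (ss.get i)) :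
      Sen (.tup ts) (.tup ss)
  | rcd (f g : L → Option (MTerm L S))
      (hdom : ∀ l, (g l).isSome → (f l).isSome)
      (hval : ∀ l t t', f l = some t → g l = some t' → Sen t t') :
      Sen (.rcd f) (.rcd g)
  | cho (f g : L → Option (MTerm L S))
      (hdom : ∀ l, (f l).isSome → (g l).isSome)
      (hval : ∀ l t t', f l = some t → g l = some t' → Sen t t') :
      Sen (.cho f) (.cho g)

end MTerm

/-- The seniority relation on well-formed ground MDL terms is transitive. -/
theorem seniority_trans {L S : Type} :
    ∀ t₁ t₂ t₃ : MTerm L S, MTerm.Sen t₁ t₂ → MTerm.Sen t₂ t₃ → MTerm.Sen t₁ t₃ := by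

  intro t₁ t₂ t₃ h12 h23
  induction h12 generalizing t₃ with
  | none_le g =>
    cases h23 with
    | none_le g' => exact MTerm.Sen.none_le g'
    | le_nil _ hnc => exact absurd rfl (hnc g)
    | refl => exact MTerm.Sen.none_le g
    | cho _ g' _ _ => exact MTerm.Sen.none_le g'
  | le_nil t hnc =>
    cases h23 with
    | le_nil => exact MTerm.Sen.le_nil t hnc
    | refl => exact MTerm.Sen.le_nil t hnc
    | rcd _ g hdom hval =>
      have hg : ∀ l, g l = none := by
        intro l
        cases hgl : g l with
        | none => rfl
        | some s =>
          have := hdom l (by simp [hgl])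
          simp at this
      have : MTerm.rcd g = MTerm.nil := by
        unfold MTerm.nil; exact congrArg _ (funext hg)
      rw [this]
      exact MTerm.Sen.le_nil t hnc
  | refl => exact h23
  | tup ts ss h hs ih =>
    cases h23 with
    | le_nil _ hnc => exact MTerm.Sen.le_nil _ (by intro g hg; cases hg)
    | refl => exact MTerm.Sen.tup ts ss h hs
    | tup _ us h2 hs2 =>
      exact MTerm.Sen.tup ts us (h.trans h2)
        (fun i => ih (Fin.cast h2.symm i) _ (hs2 i))
  | rcd f g hdom hval ih =>
    cases h23 with
    | le_nil _ hnc => exact MTerm.Sen.le_nil _ (by intro g hg; cases hg)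
    | refl => exact MTerm.Sen.rcd f g hdom hval
    | rcd _ k hdom2 hval2 =>
      refine MTerm.Sen.rcd f k (fun l hl => hdom l (hdom2 l hl)) ?_
      intro l t t' hf hk
      have hgl := hdom2 l (by simp [hk])
      cases hgl2 : g l with
      | none => simp [hgl2] at hgl
      | some s => exact ih l t s hf hgl2 t' (hval2 l s t' hgl2 hk)
  | cho f g hdom hval ih =>
    cases h23 with
    | none_le g' =>
      have hf : f = fun _ => none := by
        funext l
        cases hfl : f l with
        | none => rfl
        | some s => have := hdom l (by simp [hfl]); simp at this
      rw [show MTerm.cho f = MTerm.bot from by rw [hf]; rfl]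
      exact MTerm.Sen.none_le g'
    | le_nil _ hnc => exact absurd rfl (hnc g)
    | refl => exact MTerm.Sen.cho f g hdom hval
    | cho _ k hdom2 hval2 =>
      refine MTerm.Sen.cho f k (fun l hl => hdom2 l (hdom l hl)) ?_
      intro l t t' hf hk
      have hgl := hdom l (by simp [hf])
      cases hgl2 : g l with
      | none => simp [hgl2] at hgl
      | some s => exact ih l t s hf hgl2 t' (hval2 l s t' hgl2 hk)
end

section
/- The seniority relation ⊑ on well-formed ground MDL terms is antisymmetric: if t₁ ⊑ t₂ and t₂ ⊑ t₁ then t₁ = t₂. Hence ⊑ is a partial order. -/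
open MTerm in
private theorem sen_antisymm {L S : Type} : ∀ {a b : MTerm L S}, Sen a b → Sen b a → a = b := by
  intro a b h₁
  induction h₁ with
  | none_le g =>
    intro h₂
    cases h₂ with
    | refl => rfl
    | none_le g' => rfl
    | cho f' g' hdom hval =>
      have hg : ∀ l, g l = none := fun l => by
        cases hf : g l with
        | none => rfl
        | some t =>
          have := hdom l (by simp [hf])
          simp [MTerm.bot] at this
      have : g = fun _ => none := funext hg
      subst this; rfl
  | le_nil t ht =>
    intro h₂
    cases h₂ with
    | refl => rfl
    | le_nil _ _ => rfl
    | rcd f' g' hdom hval =>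
      have hg : ∀ l, g' l = none := fun l => by
        cases hf : g' l with
        | none => rfl
        | some u =>
          have := hdom l (by simp [hf])
          simp at this
      have : g' = fun _ => none := funext hg
      subst this; rfl
  | refl t => intro _; rfl
  | tup ts ss h hs ih =>
    intro h₂
    cases h₂ with
    | refl => rfl
    | tup _ _ h' hs' =>
      congr 1
      apply List.ext_get h
      intro i hi₁ hi₂
      have e1 : ts.get ⟨i, hi₁⟩ = ts.get (Fin.cast h.symm ⟨i, hi₂⟩) := rfl
      rw [e1]
      apply ih ⟨i, hi₂⟩
      have e2 : ss.get ⟨i, hi₂⟩ = ss.get (Fin.cast h'.symm (Fin.cast h.symm ⟨i, hi₂⟩)) := rfl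
      rw [e2]
      exact hs' (Fin.cast h.symm ⟨i, hi₂⟩)
  | rcd f g hdom hval ih =>
    intro h₂
    cases h₂ with
    | refl => rfl
    | le_nil _ ht =>
      have hg : ∀ l, g l = none := fun l => by
        cases hgl : g l with
        | none => rfl
        | some u =>
          have := hdom l (by simp [hgl])
          simp at this
      have : g = fun _ => none := funext hg
      subst this; rfl
    | rcd g' f' hdom' hval' =>
      congr 1
      funext l
      cases hfl : f l with
      | none =>
        cases hgl : g l with
        | none => rfl
        | some u =>
          have := hdom l (by simp [hgl]); simp [hfl] at this
      | some u =>
        cases hgl : g l with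
        | none =>
          have := hdom' l (by simp [hfl]); simp [hgl] at this
        | some v =>
          rw [ih l u v hfl hgl (hval' l v u hgl hfl)]
  | cho f g hdom hval ih =>
    intro h₂
    cases h₂ with
    | refl => rfl
    | none_le g'' =>
      have hf : ∀ l, f l = none := fun l => by
        cases hfl : f l with
        | none => rfl
        | some u =>
          have := hdom l (by simp [hfl])
          simp at this
      have : f = fun _ => none := funext hf
      subst this; rfl
    | cho g' f' hdom' hval' =>
      congr 1
      funext l
      cases hfl : f l with
      | none =>
        cases hgl : g l with
        | none => rfl
        | some u =>
          have := hdom' l (by simp [hgl]); simp [hfl] at this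
      | some u =>
        cases hgl : g l with
        | none =>
          have := hdom l (by simp [hfl]); simp [hgl] at this
        | some v =>
          rw [ih l u v hfl hgl (hval' l v u hgl hfl)]

open MTerm in
private theorem sen_trans {L S : Type} : ∀ {a b c : MTerm L S}, Sen a b → Sen b c → Sen a c := by
  intro a b c h₁
  induction h₁ generalizing c with
  | none_le g =>
    intro h₂
    cases h₂ with
    | refl => exact .none_le g
    | none_le g' => exact .none_le g'
    | le_nil _ ht => exact absurd rfl (ht g)
    | cho _ g' _ _ => exact .none_le g'
  | le_nil t ht =>
    intro h₂
    cases h₂ with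
    | refl => exact .le_nil t ht
    | le_nil _ _ => exact .le_nil t ht
    | rcd _ g' hdom _ =>
      have hg : ∀ l, g' l = none := fun l => by
        cases hgl : g' l with
        | none => rfl
        | some u =>
          have := hdom l (by simp [hgl])
          simp at this
      have : g' = fun _ => none := funext hg
      subst this; exact .le_nil t ht
  | refl t => intro h₂; exact h₂
  | tup ts ss h hs ih =>
    intro h₂
    cases h₂ with
    | refl => exact .tup ts ss h hs
    | le_nil _ ht => exact .le_nil _ (by intro g hg; cases hg)
    | tup _ rs h' hs' =>
      refine .tup ts rs (h.trans h') ?_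
      intro i
      have := ih (Fin.cast h'.symm i) (hs' i)
      exact this
  | rcd f g hdom hval ih =>
    intro h₂
    cases h₂ with
    | refl => exact .rcd f g hdom hval
    | le_nil _ _ => exact .le_nil _ (by intro g' hg; cases hg)
    | rcd _ g' hdom' hval' =>
      refine .rcd f g' (fun l hl => hdom l (hdom' l hl)) ?_
      intro l t t' hf hg'
      have hgl := hdom' l (by simp [hg'])
      obtain ⟨u, hu⟩ := Option.isSome_iff_exists.mp hgl
      exact ih l t u hf hu (hval' l u t' hu hg')
  | cho f g hdom hval ih =>
    intro h₂
    cases h₂ with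
    | refl => exact .cho f g hdom hval
    | le_nil _ ht => exact absurd rfl (ht g)
    | none_le g'' =>
      -- here g = fun _ => none, so f is empty too
      have hf : ∀ l, f l = none := fun l => by
        cases hfl : f l with
        | none => rfl
        | some u =>
          have := hdom l (by simp [hfl])
          simp at this
      have : f = fun _ => none := funext hf
      subst this; exact .none_le g''
    | cho _ g' hdom' hval' =>
      refine .cho f g' (fun l hl => hdom' l (hdom l hl)) ?_
      intro l t t' hf hg'
      have hgl := hdom l (by simp [hf])
      obtain ⟨u, hu⟩ := Option.isSome_iff_exists.mp hgl
      exact ih l t u hf hu (hval' l u t' hu hg')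


/-- The seniority relation is antisymmetric; hence it is a partial order. -/
theorem seniority_antisymm_partialOrder {L S : Type} :
    (∀ t₁ t₂ : MTerm L S, MTerm.Sen t₁ t₂ → MTerm.Sen t₂ t₁ → t₁ = t₂) ∧
      IsPartialOrder (MTerm L S) MTerm.Sen := by
  refine ⟨fun t₁ t₂ => sen_antisymm, ?_⟩
  exact { refl := .refl, trans := fun a b c => sen_trans,
          antisymm := fun a b => sen_antisymm }
end

section
/- Any two ground MDL record terms have a greatest lower bound (meet) under the seniority relation, obtained by taking the union of their label sets, with meets taken recursively on common labels when they exist; in particular, for flat records (records whose values are symbols), a meet exists iff the two records agree on all common labels. -/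
/-- Flat records are finite maps from labels to symbols, represented as
`Option`-valued functions.  Seniority on flat records: `r₁ ⊑ r₂` iff
`dom r₂ ⊆ dom r₁` and the two records agree on `dom r₂`. -/
def SenR {L S : Type} (r₁ r₂ : L → Option S) : Prop :=
  ∀ l s, r₂ l = some s → r₁ l = some s

/-- The union of two flat records (left-biased). -/
def unionR {L S : Type} (r₁ r₂ : L → Option S) : L → Option S :=
  fun l => (r₁ l).orElse (fun _ => r₂ l)

/-- two flat records have a common lower bound (meet) under
seniority iff they agree on all common labels, in which case their union
is the greatest lower bound. -/
theorem flat_record_meet {L S : Type} (r₁ r₂ : L → Option S) :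
    ((∃ r : L → Option S, SenR r r₁ ∧ SenR r r₂) ↔
        ∀ l a b, r₁ l = some a → r₂ l = some b → a = b) ∧
    ((∀ l a b, r₁ l = some a → r₂ l = some b → a = b) →
        SenR (unionR r₁ r₂) r₁ ∧ SenR (unionR r₁ r₂) r₂ ∧
          ∀ r : L → Option S, SenR r r₁ → SenR r r₂ → SenR r (unionR r₁ r₂)) := by
  constructor
  · constructor
    · rintro ⟨r, h1, h2⟩ l a b ha hb
      have := h1 l a ha
      have := h2 l b hb
      simp_all
    · intro hagree
      refine ⟨unionR r₁ r₂, ?_, ?_⟩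
      · intro l s hs
        simp [unionR, hs]
      · intro l s hs
        simp only [unionR]
        cases h1 : r₁ l with
        | none => simp [h1, hs]
        | some a => simp [h1, hagree l a s h1 hs]
  · intro hagree
    refine ⟨?_, ?_, ?_⟩
    · intro l s hs; simp [unionR, hs]
    · intro l s hs
      simp only [unionR]
      cases h1 : r₁ l with
      | none => simp [h1, hs]
      | some a => simp [h1, hagree l a s h1 hs]
    · intro r hr1 hr2 l s hs
      simp only [unionR] at hs
      cases h1 : r₁ l with
      | none => simp [h1] at hs; exact hr2 l s hs
      | some a => simp [h1] at hs; exact hr1 l s (hs ▸ h1)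
end
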